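/- Suppose p ∈ (0,1], θ ∈ J_γ \ J_{γ,T}, and ρ > 0. Let û ∈ L²((0,2π); ℂ) and let ĝ be the restriction to ℝ of a 2π-periodic analytic function on the strip {z ∈ ℂ : |Im z| < ρ/(2π)}, and suppose p(ξ, θ) û(ξ) = ĝ(ξ) for almost every ξ ∈ ℝ. Then û has a representative that is a C^∞ 2π-periodic function on ℝ, and ĝ(ξ₀) = 0 for every ξ₀ ∈ ℝ with p(ξ₀, θ) = 0. -/

import Mathlib

noncomputable section

/-- The arc `J_γ`. -/
def Jgamma (p γ : ℝ) : Set ℝ :=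
  Set.Icc (Real.arccos p + γ / 2) (Real.pi - Real.arccos p + γ / 2) ∪
    Set.Icc (Real.pi + Real.arccos p + γ / 2) (2 * Real.pi - Real.arccos p + γ / 2)

/-- The threshold set `J_{γ,T}`. -/
def JgammaT (p γ : ℝ) : Set ℝ :=
  {Real.arccos p + γ / 2, Real.pi - Real.arccos p + γ / 2,
    Real.pi + Real.arccos p + γ / 2, 2 * Real.pi - Real.arccos p + γ / 2}

/-- `p(z,θ) = det(Û₀(ξ) - e^{iθ})`, as a function of a complex variable `z`. -/
def Pdet (p α γ : ℝ) (z : ℂ) (θ : ℝ) : ℂ :=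
  Complex.exp (2 * θ * Complex.I) -
    2 * Complex.exp (θ * Complex.I) * (p : ℂ) * Complex.exp ((γ / 2 : ℝ) * Complex.I) *
      Complex.cos (z + α - γ / 2) +
    Complex.exp (γ * Complex.I)

namespace SmoothAux


open MeasureTheory Set

/-- The constant `K = 2p e^{i(θ+γ/2)}`. -/
def Kc (p γ θ : ℝ) : ℂ := 2 * (p : ℂ) * Complex.exp ((↑θ + ↑γ/2) * Complex.I)

/-- The constant `c = cos(θ-γ/2)/p`. -/
def cc (p γ θ : ℝ) : ℝ := Real.cos (θ - γ/2) / p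

lemma Kc_ne (p γ θ : ℝ) (hp : p ≠ 0) : Kc p γ θ ≠ 0 := by
  unfold Kc
  exact mul_ne_zero (mul_ne_zero two_ne_zero (by exact_mod_cast hp)) (Complex.exp_ne_zero _)

lemma Pdet_eq (p α γ θ : ℝ) (hp : p ≠ 0) (z : ℂ) :
    Pdet p α γ z θ
      = Kc p γ θ * ((cc p γ θ : ℝ) - Complex.cos (z + α - γ/2)) := by
  unfold Pdet Kc cc
  set w : ℂ := z + α - γ/2
  have hE : Complex.exp (θ * Complex.I) ≠ 0 := Complex.exp_ne_zero _
  have hF : Complex.exp ((γ/2 : ℂ) * Complex.I) ≠ 0 := Complex.exp_ne_zero _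
  have h2 : Complex.exp (2 * θ * Complex.I) = Complex.exp (θ * Complex.I) ^ 2 := by
    rw [← Complex.exp_nat_mul]; ring_nf
  have h3 : Complex.exp ((γ:ℂ) * Complex.I) = Complex.exp ((γ/2 : ℂ) * Complex.I) ^ 2 := by
    rw [← Complex.exp_nat_mul]; ring_nf
  have h4 : Complex.exp ((↑θ + ↑γ/2) * Complex.I)
      = Complex.exp (θ * Complex.I) * Complex.exp ((γ/2 : ℂ) * Complex.I) := by
    rw [← Complex.exp_add]; ring_nf
  have h5 : ((Real.cos (θ - γ/2) : ℝ) : ℂ)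
      = (Complex.exp ((θ:ℂ) * Complex.I) / Complex.exp ((γ/2:ℂ) * Complex.I)
        + Complex.exp ((γ/2:ℂ) * Complex.I) / Complex.exp ((θ:ℂ) * Complex.I)) / 2 := by
    rw [Complex.ofReal_cos, Complex.cos, ← Complex.exp_sub, ← Complex.exp_sub]
    push_cast
    ring_nf
  simp only [Complex.ofReal_div]
  rw [h2, h3, h4, h5]
  field_simp [hp, hE, hF]
  push_cast
  ring

lemma hasDerivAt_Pdet (p α γ θ : ℝ) (hp : p ≠ 0) (z : ℂ) :
    HasDerivAt (fun w => Pdet p α γ w θ) (Kc p γ θ * Complex.sin (z + α - γ/2)) z := by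
  have h : (fun w => Pdet p α γ w θ)
      = fun w => Kc p γ θ * ((cc p γ θ : ℝ) - Complex.cos (w + α - γ/2)) :=
    funext (Pdet_eq p α γ θ hp)
  rw [h]
  have h1 : HasDerivAt (fun w : ℂ => w + ↑α - ↑γ/2) 1 z := by
    simpa using ((hasDerivAt_id z).add_const (↑α : ℂ)).sub_const ((↑γ : ℂ)/2)
  have h2 := (Complex.hasDerivAt_cos (z + ↑α - ↑γ/2)).comp z h1
  have h3 := ((hasDerivAt_const z ((cc p γ θ : ℝ) : ℂ)).sub h2).const_mul (Kc p γ θ)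
  refine h3.congr_deriv ?_
  ring

lemma Pdet_periodic (p α γ θ : ℝ) (z : ℂ) :
    Pdet p α γ (z + 2 * Real.pi) θ = Pdet p α γ z θ := by
  unfold Pdet
  rw [show z + 2*(Real.pi:ℂ) + ↑α - ↑γ/2 = z + ↑α - ↑γ/2 + 2*↑Real.pi by ring,
    Complex.cos_add_two_pi]

lemma abs_cos_sub_cos_le (s t : ℝ) : |Real.cos s - Real.cos t| ≤ |s - t| := by
  rw [Real.cos_sub_cos, abs_mul, abs_mul]
  have h1 : |Real.sin ((s+t)/2)| ≤ 1 := Real.abs_sin_le_one _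
  have h2 : |Real.sin ((s-t)/2)| ≤ |(s-t)/2| := Real.abs_sin_le_abs
  have h3 : |(s-t)/2| = |s-t|/2 := by rw [abs_div, abs_two]
  have h4 : |(-2 : ℝ)| = 2 := by norm_num
  rw [h4]
  nlinarith [abs_nonneg (Real.sin ((s+t)/2)), abs_nonneg (Real.sin ((s-t)/2)),
    abs_nonneg (s-t)]

lemma not_L2 {u : ℝ → ℂ} {a b k : ℝ} (hab : a < b) (hk : 0 < k)
    (hu : IntegrableOn (fun x => ‖u x‖^2) (Set.Ioo a b))
    (hbound : ∀ᵐ x ∂(volume.restrict (Set.Ioo a b)), k / (x - a) ≤ ‖u x‖) :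
    False := by
  have hmeas : AEStronglyMeasurable (fun x => (k / (x - a))^2)
      (volume.restrict (Set.Ioo a b)) := by
    apply Measurable.aestronglyMeasurable
    fun_prop
  have hle : ∀ᵐ x ∂(volume.restrict (Ioo a b)), ‖(k/(x-a))^2‖ ≤ ‖‖u x‖^2‖ := by
    filter_upwards [hbound, ae_restrict_mem measurableSet_Ioo] with x hx hmem
    have hxa : 0 < x - a := sub_pos.2 hmem.1
    have h0 : 0 ≤ k / (x - a) := div_nonneg hk.le hxa.le
    rw [Real.norm_eq_abs, Real.norm_eq_abs, abs_of_nonneg (by positivity),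
      abs_of_nonneg (by positivity)]
    exact pow_le_pow_left₀ h0 hx 2
  have hint : IntegrableOn (fun x => (k/(x-a))^2) (Ioo a b) := MeasureTheory.Integrable.mono hu hmeas hle
  have hint2 : IntegrableOn (fun x => ((x-a)^2)⁻¹) (Ioo a b) := by
    have h' := hint.const_mul ((k^2)⁻¹)
    refine h'.congr (Filter.Eventually.of_forall fun x => ?_)
    show (k^2)⁻¹ * (k/(x-a))^2 = ((x-a)^2)⁻¹
    rw [div_pow, div_eq_mul_inv, ← mul_assoc, inv_mul_cancel₀ (pow_ne_zero 2 hk.ne')]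
    ring
  have h3 : IntervalIntegrable (fun x => ((x-a)^2)⁻¹) volume a b :=
    (intervalIntegrable_iff_integrableOn_Ioo_of_le hab.le).2 hint2
  have h5 : IntervalIntegrable (fun x : ℝ => (x^2)⁻¹) volume 0 (b - a) := by
    have h := h3.comp_sub_right (-a)
    rw [show a + -a = (0:ℝ) by ring, show b + -a = b - a by ring] at h
    simpa [sub_neg_eq_add] using h
  have h6 : IntegrableOn (fun x : ℝ => (x^2)⁻¹) (Ioo 0 (b-a)) :=
    (intervalIntegrable_iff_integrableOn_Ioo_of_le (by linarith)).1 h5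
  have h7 : IntegrableOn (fun x : ℝ => x ^ (-2 : ℝ)) (Ioo 0 (b-a)) := by
    refine h6.congr_fun (fun x hx => ?_) measurableSet_Ioo
    rw [Real.rpow_neg hx.1.le, show ((2:ℝ)) = ((2:ℕ):ℝ) by norm_num, Real.rpow_natCast]
  rw [intervalIntegral.integrableOn_Ioo_rpow_iff (by linarith : (0:ℝ) < b - a)] at h7
  norm_num at h7


lemma cc_abs_lt_one (p α γ θ : ℝ) (hp : p ∈ Set.Ioc (0 : ℝ) 1)
    (hθ : θ ∈ Jgamma p γ \ JgammaT p γ) : |cc p γ θ| < 1 := by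
  obtain ⟨hθJ, hθT⟩ := hθ
  simp only [JgammaT, Set.mem_insert_iff, Set.mem_singleton_iff, not_or] at hθT
  obtain ⟨hT1, hT2, hT3, hT4⟩ := hθT
  set a := Real.arccos p with ha_def
  have ha0 : 0 ≤ a := Real.arccos_nonneg p
  have hapi : a ≤ Real.pi := Real.arccos_le_pi p
  have hppos : 0 < p := hp.1
  have hcosa : Real.cos a = p := Real.cos_arccos (by linarith) hp.2
  have key : ∀ φ : ℝ, a < φ → φ < Real.pi - a → |Real.cos φ / p| < 1 := by
    intro φ h1 h2
    have hmema : a ∈ Set.Icc 0 Real.pi := ⟨ha0, hapi⟩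
    have hmemφ : φ ∈ Set.Icc 0 Real.pi := ⟨by linarith, by linarith⟩
    have hmemb : Real.pi - a ∈ Set.Icc 0 Real.pi := ⟨by linarith, by linarith⟩
    have hlt1 : Real.cos φ < p := by
      rw [← hcosa]; exact Real.strictAntiOn_cos hmema hmemφ h1
    have hlt2 : -p < Real.cos φ := by
      have := Real.strictAntiOn_cos hmemφ hmemb h2
      rw [Real.cos_pi_sub, hcosa] at this
      linarith
    rw [abs_lt]
    constructor
    · rw [lt_div_iff₀ hppos]; linarith
    · rw [div_lt_iff₀ hppos]; linarith
  unfold cc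
  rcases hθJ with h | h
  · have h1 : a < θ - γ/2 := by
      rcases lt_or_eq_of_le h.1 with h' | h'
      · simp only [← ha_def] at h'; linarith
      · exact absurd h'.symm (fun hh => hT1 (by rw [← ha_def] at hh; linarith))
    have h2 : θ - γ/2 < Real.pi - a := by
      rcases lt_or_eq_of_le h.2 with h' | h'
      · simp only [← ha_def] at h'; linarith
      · exact absurd h' (fun hh => hT2 (by rw [← ha_def] at hh; linarith))
    exact key _ h1 h2
  · have h1 : Real.pi + a < θ - γ/2 := by
      rcases lt_or_eq_of_le h.1 with h' | h'
      · simp only [← ha_def] at h'; linarith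
      · exact absurd h'.symm (fun hh => hT3 (by rw [← ha_def] at hh; linarith))
    have h2 : θ - γ/2 < 2*Real.pi - a := by
      rcases lt_or_eq_of_le h.2 with h' | h'
      · simp only [← ha_def] at h'; linarith
      · exact absurd h' (fun hh => hT4 (by rw [← ha_def] at hh; linarith))
    have : Real.cos (θ - γ/2) = Real.cos (2*Real.pi - (θ - γ/2)) :=
      (Real.cos_two_pi_sub _).symm
    rw [this]
    exact key _ (by linarith) (by linarith)

end SmoothAux

/-- if `p(·,θ) uhat = ghat` a.e. with `uhat ∈ L²(0,2π)` (2π-periodic) and `ghat` the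
restriction of a 2π-periodic analytic function on a strip, then `uhat` has a smooth
2π-periodic representative and `ghat` vanishes at every real zero of `p(·,θ)`. -/
theorem smoothness_of_u
    (p α γ : ℝ) (hp : p ∈ Set.Ioc (0 : ℝ) 1)
    (hα : α ∈ Set.Ico 0 (2 * Real.pi)) (hγ : γ ∈ Set.Ico 0 (2 * Real.pi))
    (θ : ℝ) (hθ : θ ∈ Jgamma p γ \ JgammaT p γ)
    (ρ : ℝ) (hρ : 0 < ρ)
    (uhat : ℝ → ℂ) (huhatper : Function.Periodic uhat (2 * Real.pi))
    (huhatL2 : MeasureTheory.MemLp uhat 2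
      (MeasureTheory.volume.restrict (Set.Ioo 0 (2 * Real.pi))))
    (G : ℂ → ℂ)
    (hG : AnalyticOnNhd ℂ G {z : ℂ | |z.im| < ρ / (2 * Real.pi)})
    (hGper : ∀ z : ℂ, |z.im| < ρ / (2 * Real.pi) → G (z + 2 * Real.pi) = G z)
    (ghat : ℝ → ℂ) (hghat : ∀ ξ : ℝ, ghat ξ = G ξ)
    (heq : ∀ᵐ ξ : ℝ ∂MeasureTheory.volume, Pdet p α γ ξ θ * uhat ξ = ghat ξ) :
    (∃ v : ℝ → ℂ, ContDiff ℝ (⊤ : ℕ∞) v ∧ Function.Periodic v (2 * Real.pi) ∧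
        uhat =ᵐ[MeasureTheory.volume] v) ∧
      ∀ ξ₀ : ℝ, Pdet p α γ ξ₀ θ = 0 → ghat ξ₀ = 0 := by
  classical
  obtain ⟨hppos, hple⟩ := hp
  have hp0 : p ≠ 0 := ne_of_gt hppos
  have hπ : (0:ℝ) < Real.pi := Real.pi_pos
  have hc : |SmoothAux.cc p γ θ| < 1 := SmoothAux.cc_abs_lt_one p α γ θ ⟨hppos, hple⟩ hθ
  set c := SmoothAux.cc p γ θ with hc_def
  set K := SmoothAux.Kc p γ θ with hK_def
  have hKne : K ≠ 0 := SmoothAux.Kc_ne p γ θ hp0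
  have hKpos : 0 < ‖K‖ := norm_pos_iff.2 hKne
  -- the strip
  have hstrip : ∀ x : ℝ, (x:ℂ) ∈ {z : ℂ | |z.im| < ρ / (2 * Real.pi)} := by
    intro x
    simp only [Set.mem_setOf_eq, Complex.ofReal_im, abs_zero]
    positivity
  have hopen : IsOpen {z : ℂ | |z.im| < ρ / (2 * Real.pi)} :=
    isOpen_lt (by fun_prop) continuous_const
  -- cast of cos at real points
  have hcast : ∀ t : ℝ, Complex.cos ((t:ℂ) + ↑α - ↑γ/2)
      = ((Real.cos (t + α - γ/2) : ℝ) : ℂ) := by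
    intro t
    rw [Complex.ofReal_cos]
    congr 1
    push_cast
    ring
  -- characterization of real zeros
  have hzero_iff : ∀ t : ℝ, Pdet p α γ (t:ℂ) θ = 0 ↔ Real.cos (t + α - γ/2) = c := by
    intro t
    rw [SmoothAux.Pdet_eq p α γ θ hp0, hcast]
    constructor
    · intro h
      rcases mul_eq_zero.1 h with h | h
      · exact absurd h hKne
      · have := sub_eq_zero.1 h
        exact_mod_cast this.symm
    · intro h
      rw [h]
      simp [hc_def]
  -- derivative nonvanishing at real zeros
  have hsin : ∀ t : ℝ, Real.cos (t + α - γ/2) = c →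
      Complex.sin ((t:ℂ) + ↑α - ↑γ/2) ≠ 0 := by
    intro t ht
    have harg : ((t:ℂ) + ↑α - ↑γ/2) = ((t + α - γ/2 : ℝ) : ℂ) := by push_cast; ring
    rw [harg, ← Complex.ofReal_sin]
    simp only [ne_eq, Complex.ofReal_eq_zero]
    intro h0
    have hpy := Real.sin_sq_add_cos_sq (t + α - γ/2)
    rw [h0, ht] at hpy
    have : c^2 = 1 := by nlinarith
    have h1 := abs_lt.1 hc
    nlinarith
  -- norm bound on Pdet near a real zero
  have hQbound : ∀ ξ₁ t : ℝ, Real.cos (ξ₁ + α - γ/2) = c →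
      ‖Pdet p α γ (t:ℂ) θ‖ ≤ ‖K‖ * |t - ξ₁| := by
    intro ξ₁ t hξ₁
    rw [SmoothAux.Pdet_eq p α γ θ hp0, hcast, norm_mul, ← hK_def]
    have h1 : ((c:ℝ):ℂ) - ((Real.cos (t + α - γ/2) : ℝ) : ℂ)
        = ((Real.cos (ξ₁ + α - γ/2) - Real.cos (t + α - γ/2) : ℝ) : ℂ) := by
      rw [hξ₁]; push_cast; ring
    rw [h1]
    have h2 : ‖((Real.cos (ξ₁ + α - γ/2) - Real.cos (t + α - γ/2) : ℝ) : ℂ)‖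
        = |Real.cos (ξ₁ + α - γ/2) - Real.cos (t + α - γ/2)| := by
      rw [Complex.norm_real, Real.norm_eq_abs]
    rw [h2]
    have h3 := SmoothAux.abs_cos_sub_cos_le (ξ₁ + α - γ/2) (t + α - γ/2)
    have h4 : |(ξ₁ + α - γ/2) - (t + α - γ/2)| = |t - ξ₁| := by
      rw [show (ξ₁ + α - γ/2) - (t + α - γ/2) = -(t - ξ₁) by ring, abs_neg]
    rw [h4] at h3
    exact mul_le_mul_of_nonneg_left h3 (norm_nonneg K)
  -- periodicity of G on the reals
  have hGR : Function.Periodic (fun t : ℝ => G (t:ℂ)) (2 * Real.pi) := by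
    intro t
    have : ((t + 2*Real.pi : ℝ) : ℂ) = (t:ℂ) + 2*Real.pi := by push_cast; ring
    simp only [this]
    exact hGper (t:ℂ) (hstrip t)
  have hQR : Function.Periodic (fun t : ℝ => Pdet p α γ (t:ℂ) θ) (2 * Real.pi) := by
    intro t
    have : ((t + 2*Real.pi : ℝ) : ℂ) = (t:ℂ) + 2*Real.pi := by push_cast; ring
    simp only [this]
    exact SmoothAux.Pdet_periodic p α γ θ (t:ℂ)
  -- PART 2 : G vanishes at real zeros
  have claim2 : ∀ ξ₀ : ℝ, Pdet p α γ (ξ₀:ℂ) θ = 0 → G (ξ₀:ℂ) = 0 := by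
    intro ξ₀ hQ0
    by_contra hG0
    -- move the zero into [0, 2π)
    set n : ℤ := ⌊ξ₀ / (2*Real.pi)⌋ with hn_def
    set ξ₁ : ℝ := ξ₀ - n * (2*Real.pi) with hξ₁_def
    have h2π : (0:ℝ) < 2*Real.pi := by linarith
    have hξ₁0 : 0 ≤ ξ₁ := Int.sub_floor_div_mul_nonneg ξ₀ h2π
    have hξ₁2π : ξ₁ < 2*Real.pi := Int.sub_floor_div_mul_lt ξ₀ h2π
    have hQξ₁ : Pdet p α γ (ξ₁:ℂ) θ = 0 := by
      have := hQR.sub_int_mul_eq (x := ξ₀) n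
      simpa [hξ₁_def, hQ0] using this
    have hGξ₁ : G (ξ₁:ℂ) ≠ 0 := by
      have := hGR.sub_int_mul_eq (x := ξ₀) n
      simp only [hξ₁_def]
      rw [this]
      exact hG0
    have hcos1 : Real.cos (ξ₁ + α - γ/2) = c := (hzero_iff ξ₁).1 hQξ₁
    -- a neighbourhood where ‖G‖ > m
    set m : ℝ := ‖G (ξ₁:ℂ)‖ / 2 with hm_def
    have hmpos : 0 < m := by
      have : 0 < ‖G (ξ₁:ℂ)‖ := norm_pos_iff.2 hGξ₁
      positivity
    have hevC : ∀ᶠ z in nhds ((ξ₁:ℝ):ℂ), m < ‖G z‖ := by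
      have hcont : ContinuousAt (fun z => ‖G z‖) ((ξ₁:ℝ):ℂ) :=
        ((hG _ (hstrip ξ₁)).continuousAt).norm
      have hmlt : m < ‖G ((ξ₁:ℝ):ℂ)‖ := by
        rw [hm_def]
        exact half_lt_self (norm_pos_iff.2 hGξ₁)
      exact hcont.eventually_const_lt hmlt
    have hevR : ∀ᶠ t : ℝ in nhds ξ₁, m < ‖G (t:ℂ)‖ :=
      (Complex.continuous_ofReal.continuousAt : Filter.Tendsto _ _ _).eventually hevC
    obtain ⟨δ₀, hδ₀pos, hδ₀⟩ := Metric.eventually_nhds_iff.1 hevR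
    set δ : ℝ := min (δ₀/2) (2*Real.pi - ξ₁) with hδ_def
    have hδpos : 0 < δ := lt_min (by linarith) (by linarith)
    have hsub : Set.Ioo ξ₁ (ξ₁+δ) ⊆ Set.Ioo 0 (2*Real.pi) := by
      intro x hx
      have := min_le_right (δ₀/2) (2*Real.pi - ξ₁)
      constructor
      · linarith [hx.1]
      · have := hx.2
        have hδle : δ ≤ 2*Real.pi - ξ₁ := min_le_right _ _
        linarith
    -- integrability of ‖uhat‖² on the subinterval
    have hI := huhatL2.integrable_norm_rpow (by norm_num) (by norm_num)
    have hI2 : MeasureTheory.IntegrableOn (fun x => ‖uhat x‖^2)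
        (Set.Ioo 0 (2*Real.pi)) := by
      have h2r : ((2:ENNReal)).toReal = (2:ℝ) := by norm_num
      rw [h2r] at hI
      refine hI.congr (Filter.Eventually.of_forall fun x => ?_)
      show ‖uhat x‖ ^ (2:ℝ) = ‖uhat x‖ ^ (2:ℕ)
      rw [← Real.rpow_natCast (‖uhat x‖) 2]
      norm_num
    have hIsub : MeasureTheory.IntegrableOn (fun x => ‖uhat x‖^2)
        (Set.Ioo ξ₁ (ξ₁+δ)) := hI2.mono_set hsub
    -- lower bound
    set k : ℝ := m / ‖K‖ with hk_def
    have hkpos : 0 < k := div_pos hmpos hKpos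
    have hkK : k * ‖K‖ = m := div_mul_cancel₀ m hKpos.ne'
    have hbound : ∀ᵐ x ∂(MeasureTheory.volume.restrict (Set.Ioo ξ₁ (ξ₁+δ))),
        k / (x - ξ₁) ≤ ‖uhat x‖ := by
      filter_upwards [MeasureTheory.ae_restrict_of_ae heq,
        MeasureTheory.ae_restrict_mem measurableSet_Ioo] with x hx hmem
      have hxpos : 0 < x - ξ₁ := sub_pos.2 hmem.1
      have hxδ : x - ξ₁ < δ := by linarith [hmem.2]
      have hdist : dist x ξ₁ < δ₀ := by
        rw [Real.dist_eq, abs_of_pos hxpos]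
        have : δ ≤ δ₀/2 := min_le_left _ _
        linarith
      have hGx : m < ‖G (x:ℂ)‖ := hδ₀ hdist
      have hnorm : ‖Pdet p α γ (x:ℂ) θ‖ * ‖uhat x‖ = ‖G (x:ℂ)‖ := by
        rw [← norm_mul, hx, hghat]
      have hQb : ‖Pdet p α γ (x:ℂ) θ‖ ≤ ‖K‖ * (x - ξ₁) := by
        have := hQbound ξ₁ x hcos1
        rwa [abs_of_pos hxpos] at this
      rw [div_le_iff₀ hxpos]
      nlinarith [mul_le_mul_of_nonneg_right hQb (norm_nonneg (uhat x)),
        norm_nonneg (Pdet p α γ (x:ℂ) θ), norm_nonneg (uhat x)]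
    exact SmoothAux.not_L2 (by linarith : ξ₁ < ξ₁ + δ) hkpos
      (by simpa using hIsub) (by simpa using hbound)
  -- PART 1: the smooth representative
  have hQdiff : Differentiable ℂ (fun z => Pdet p α γ z θ) :=
    fun z => (SmoothAux.hasDerivAt_Pdet p α γ θ hp0 z).differentiableAt
  set H : ℂ → ℂ := fun z =>
    if Pdet p α γ z θ = 0 then deriv G z / deriv (fun w => Pdet p α γ w θ) z
    else G z / Pdet p α γ z θ with hH_def
  have hderivQ : ∀ z : ℂ, deriv (fun w => Pdet p α γ w θ) z
      = SmoothAux.Kc p γ θ * Complex.sin (z + ↑α - ↑γ/2) :=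
    fun z => (SmoothAux.hasDerivAt_Pdet p α γ θ hp0 z).deriv
  -- H is analytic at every real point
  have hH : ∀ x : ℝ, AnalyticAt ℂ H (x:ℂ) := by
    intro x
    by_cases hx : Pdet p α γ (x:ℂ) θ = 0
    · -- simple zero: use dslope factorization
      obtain ⟨P, hP⟩ := hQdiff.analyticAt (x:ℂ)
      have hq : AnalyticAt ℂ (dslope (fun z => Pdet p α γ z θ) (x:ℂ)) (x:ℂ) :=
        ⟨_, hP.has_fpower_series_dslope_fslope⟩
      obtain ⟨Pg, hPg⟩ := hG (x:ℂ) (hstrip x)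
      have hg : AnalyticAt ℂ (dslope G (x:ℂ)) (x:ℂ) :=
        ⟨_, hPg.has_fpower_series_dslope_fslope⟩
      have hq0 : dslope (fun z => Pdet p α γ z θ) (x:ℂ) (x:ℂ) ≠ 0 := by
        rw [dslope_same, hderivQ]
        exact mul_ne_zero hKne (hsin x ((hzero_iff x).1 hx))
      have hAn : AnalyticAt ℂ
          (fun z => dslope G (x:ℂ) z / dslope (fun w => Pdet p α γ w θ) (x:ℂ) z) (x:ℂ) :=
        hg.div hq hq0
      refine hAn.congr ?_
      have hne : ∀ᶠ z in nhds ((x:ℝ):ℂ), dslope (fun w => Pdet p α γ w θ) (x:ℂ) z ≠ 0 :=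
        hq.continuousAt.eventually_ne hq0
      filter_upwards [hne] with z hz
      by_cases hzx : z = (x:ℂ)
      · subst hzx
        simp only [hH_def, if_pos hx, dslope_same]
      · have hQz : Pdet p α γ z θ = (z - (x:ℂ)) * dslope (fun w => Pdet p α γ w θ) (x:ℂ) z := by
          have := sub_smul_dslope (fun w => Pdet p α γ w θ) (x:ℂ) z
          simp only [smul_eq_mul] at this
          rw [this, hx, sub_zero]
        have hGz : G z = (z - (x:ℂ)) * dslope G (x:ℂ) z := by
          have := sub_smul_dslope G (x:ℂ) z
          simp only [smul_eq_mul] at this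
          rw [this, claim2 x hx, sub_zero]
        have hzxne : z - (x:ℂ) ≠ 0 := sub_ne_zero.2 hzx
        have hQzne : Pdet p α γ z θ ≠ 0 := by
          rw [hQz]; exact mul_ne_zero hzxne hz
        simp only [hH_def, if_neg hQzne]
        rw [hQz, hGz, mul_div_mul_left _ _ hzxne]
    · have hAn : AnalyticAt ℂ (fun z => G z / Pdet p α γ z θ) (x:ℂ) :=
        ((hG (x:ℂ) (hstrip x))).div (hQdiff.analyticAt (x:ℂ)) hx
      refine hAn.congr ?_
      have hne : ∀ᶠ z in nhds ((x:ℝ):ℂ), Pdet p α γ z θ ≠ 0 :=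
        (hQdiff.continuous.continuousAt).eventually_ne hx
      filter_upwards [hne] with z hz
      simp only [hH_def, if_neg hz]
  refine ⟨⟨fun t : ℝ => H (t:ℂ), ?_, ?_, ?_⟩, ?_⟩
  · -- smoothness
    rw [contDiff_iff_contDiffAt]
    intro t
    have h1 : AnalyticAt ℝ H ((t:ℝ):ℂ) := (hH t).restrictScalars
    have h2 : AnalyticAt ℝ (fun s : ℝ => (s:ℂ)) t := Complex.ofRealCLM.analyticAt t
    exact (h1.comp h2).contDiffAt
  · -- periodicity
    intro t
    have hcast2 : ((t + 2*Real.pi : ℝ) : ℂ) = (t:ℂ) + 2*Real.pi := by push_cast; ring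
    show H _ = H _
    rw [hcast2]
    have hQper2 : Pdet p α γ ((t:ℂ) + 2*Real.pi) θ = Pdet p α γ (t:ℂ) θ :=
      SmoothAux.Pdet_periodic p α γ θ (t:ℂ)
    simp only [hH_def, hQper2]
    by_cases h0 : Pdet p α γ (t:ℂ) θ = 0
    · rw [if_pos h0, if_pos h0]
      congr 1
      · -- deriv G is periodic at real points
        have hEv : (fun z => G (z + 2*Real.pi)) =ᶠ[nhds ((t:ℝ):ℂ)] G := by
          filter_upwards [hopen.mem_nhds (hstrip t)] with z hz
          exact hGper z hz
        calc deriv G ((t:ℂ) + 2*Real.pi)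
            = deriv (fun z => G (z + 2*Real.pi)) (t:ℂ) := by
              rw [deriv_comp_add_const]
          _ = deriv G (t:ℂ) := hEv.deriv_eq
      · rw [hderivQ, hderivQ]
        rw [show (t:ℂ) + 2*Real.pi + ↑α - ↑γ/2 = ((t:ℂ) + ↑α - ↑γ/2) + 2*↑Real.pi by ring,
          Complex.sin_add_two_pi]
    · rw [if_neg h0, if_neg h0]
      congr 1
      exact hGper (t:ℂ) (hstrip t)
  · -- a.e. equality
    set E : Set ℝ := {t : ℝ | Pdet p α γ (t:ℂ) θ = 0} with hE_def
    have hEc : E.Countable := by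
      have habs : -1 ≤ c ∧ c ≤ 1 := abs_le.1 hc.le
      have hsubE : E ⊆ (Set.range fun k : ℤ =>
            Real.arccos c - 2*(k:ℝ)*Real.pi - α + γ/2) ∪
          (Set.range fun k : ℤ => 2*(k:ℝ)*Real.pi - Real.arccos c - α + γ/2) := by
        intro t ht
        have h1 : Real.cos (t + α - γ/2) = c := (hzero_iff t).1 ht
        have h2 : Real.cos (t + α - γ/2) = Real.cos (Real.arccos c) := by
          rw [Real.cos_arccos habs.1 habs.2]; exact h1
        rw [Real.cos_eq_cos_iff] at h2
        obtain ⟨k, hk | hk⟩ := h2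
        · left; exact ⟨k, by linarith⟩
        · right; exact ⟨k, by linarith⟩
      exact Set.Countable.mono hsubE
        ((Set.countable_range _).union (Set.countable_range _))
    have hE0 : MeasureTheory.volume E = 0 := hEc.measure_zero _
    have hEae : ∀ᵐ t : ℝ ∂MeasureTheory.volume, t ∉ E := by
      rw [MeasureTheory.ae_iff]
      simpa using hE0
    filter_upwards [heq, hEae] with t h1 h2
    have hQt : Pdet p α γ (t:ℂ) θ ≠ 0 := h2
    show uhat t = H (t:ℂ)
    simp only [hH_def, if_neg hQt]
    rw [eq_div_iff hQt, mul_comm, h1, hghat]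
  · intro ξ₀ h
    rw [hghat]
    exact claim2 ξ₀ h
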